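/- Let Y be a random complex variable of the form Y = uᵀ X_r + i·uᵀ X_i for a fixed u ∈ ℝ^{2N} and random real vectors X_r, X_i ∈ ℝ^{2N}. Then E[|Y|⁴] = vᵀ C v and E[|Y|²] = vᵀ b, where v = qvec(u), b = E[svec(X̄)], C = E[svec(X̄) svec(X̄)ᵀ], and X̄ = X_r X_rᵀ + X_i X_iᵀ. Consequently the CMA cost E[(|Y|² − R₂)²] equals vᵀ C v − 2R₂ bᵀ v + R₂². -/

import Mathlib

open Matrix

abbrev Qidx (n : ℕ) := {p : Fin n × Fin n // p.1 ≤ p.2}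

def qvec {n : ℕ} (u : Fin n → ℝ) : Qidx n → ℝ := fun p => u p.1.1 * u p.1.2

def svec {n : ℕ} (M : Matrix (Fin n) (Fin n) ℝ) : Qidx n → ℝ :=
  fun p => if p.1.1 = p.1.2 then M p.1.1 p.1.2 else 2 * M p.1.1 p.1.2

/-!
`|Y|² = (uᵀXr)² + (uᵀXi)² = uᵀ Xbar u`, and a quadratic form `uᵀ M u` with `M` symmetric is the
pairing `qvec u ⬝ᵥ svec M` of half-vectorizations: each off-diagonal pair `(i, j)`, `(j, i)` is
counted once, with weight 2 in `svec`. So `|Y|² = v ⬝ᵥ svec Xbar` is linear in `svec Xbar` and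
`|Y|⁴ = vᵀ (svec Xbar svec Xbarᵀ) v`; averaging gives the moments, and expanding the square the
cost.
-/

lemma sum_qidx_ite_eq_sum {n : ℕ} (f : Fin n × Fin n → ℝ) (hf : ∀ i j, f (i, j) = f (j, i)) :
    ∑ p : Qidx n, (if p.1.1 = p.1.2 then f p.1 else 2 * f p.1) = ∑ p, f p := by
  have hswap : ∑ p ∈ Finset.univ.filter (fun p : Fin n × Fin n => p.1 < p.2), f p =
      ∑ p ∈ Finset.univ.filter (fun p : Fin n × Fin n => ¬ p.1 ≤ p.2), f p :=
    Finset.sum_equiv (Equiv.prodComm _ _) (by simp) fun p _ => hf p.1 p.2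
  calc ∑ p : Qidx n, (if p.1.1 = p.1.2 then f p.1 else 2 * f p.1)
      = ∑ p ∈ Finset.univ.filter (fun p : Fin n × Fin n => p.1 ≤ p.2),
          (f p + if p.1 = p.2 then 0 else f p) := by
        rw [Finset.sum_subtype _ Finset.mem_filter_univ]
        refine Fintype.sum_congr _ _ fun p => ?_
        split_ifs <;> ring
    _ = ∑ p ∈ Finset.univ.filter (fun p : Fin n × Fin n => p.1 ≤ p.2), f p +
          ∑ p ∈ Finset.univ.filter (fun p : Fin n × Fin n => p.1 < p.2), f p := by
        rw [Finset.sum_add_distrib, Finset.sum_ite, Finset.sum_const_zero, zero_add,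
          Finset.filter_filter]
        simp_rw [← lt_iff_le_and_ne]
    _ = ∑ p, f p := by
        rw [hswap, Finset.sum_filter_add_sum_filter_not]

lemma qvec_dotProduct_svec {n : ℕ} (u : Fin n → ℝ) {M : Matrix (Fin n) (Fin n) ℝ}
    (hM : M.IsSymm) : qvec u ⬝ᵥ svec M = u ⬝ᵥ M *ᵥ u := by
  calc qvec u ⬝ᵥ svec M
      = ∑ p : Qidx n, (if p.1.1 = p.1.2 then u p.1.1 * u p.1.2 * M p.1.1 p.1.2
          else 2 * (u p.1.1 * u p.1.2 * M p.1.1 p.1.2)) := by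
        refine Fintype.sum_congr _ _ fun p => ?_
        simp only [qvec, svec]
        split_ifs <;> ring
    _ = ∑ p : Fin n × Fin n, u p.1 * u p.2 * M p.1 p.2 :=
        sum_qidx_ite_eq_sum (fun p => u p.1 * u p.2 * M p.1 p.2) fun i j => by
          simp only [hM.apply i j]
          ring
    _ = u ⬝ᵥ M *ᵥ u := by
        simp only [dotProduct, mulVec, Fintype.sum_prod_type, Finset.mul_sum]
        refine Fintype.sum_congr _ _ fun i => Fintype.sum_congr _ _ fun j => ?_
        ring

lemma svec_add {n : ℕ} (A B : Matrix (Fin n) (Fin n) ℝ) :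
    svec (A + B) = svec A + svec B := by
  funext p
  simp only [svec, Matrix.add_apply, Pi.add_apply]
  split_ifs <;> ring

lemma dotProduct_vecMulVec_mulVec {n : Type*} [Fintype n] (v s : n → ℝ) :
    v ⬝ᵥ vecMulVec s s *ᵥ v = (v ⬝ᵥ s) ^ 2 := by
  rw [vecMulVec_mulVec, op_smul_eq_smul, dotProduct_smul, smul_eq_mul, dotProduct_comm s, sq]

lemma qvec_dotProduct_svec_vecMulVec {n : ℕ} (u x : Fin n → ℝ) :
    qvec u ⬝ᵥ svec (vecMulVec x x) = (u ⬝ᵥ x) ^ 2 := by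
  rw [qvec_dotProduct_svec u (transpose_vecMulVec x x), dotProduct_vecMulVec_mulVec]

lemma norm_sq_eq_qvec_dotProduct_svec {n : ℕ} (u xr xi : Fin n → ℝ) :
    ‖((u ⬝ᵥ xr : ℝ) : ℂ) + (u ⬝ᵥ xi : ℝ) * Complex.I‖ ^ 2 =
      qvec u ⬝ᵥ svec (vecMulVec xr xr + vecMulVec xi xi) := by
  rw [Complex.sq_norm, Complex.normSq_add_mul_I, svec_add, dotProduct_add,
    qvec_dotProduct_svec_vecMulVec, qvec_dotProduct_svec_vecMulVec]

lemma mul_sum_sq_dotProduct {ι n : Type*} [Fintype ι] [Fintype n] (c : ℝ) (v : n → ℝ)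
    (s : ι → n → ℝ) :
    c * ∑ k, (v ⬝ᵥ s k) ^ 2 = v ⬝ᵥ (c • ∑ k, vecMulVec (s k) (s k)) *ᵥ v := by
  simp_rw [smul_mulVec, dotProduct_smul, sum_mulVec, dotProduct_sum,
    dotProduct_vecMulVec_mulVec, smul_eq_mul]

lemma inv_card_mul_sum_sub_sq {ι : Type*} [Fintype ι] [Nonempty ι] (y : ι → ℝ) (r : ℝ) :
    (Fintype.card ι : ℝ)⁻¹ * ∑ k, (y k - r) ^ 2 =
      (Fintype.card ι : ℝ)⁻¹ * ∑ k, y k ^ 2 - 2 * r * ((Fintype.card ι : ℝ)⁻¹ * ∑ k, y k) +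
        r ^ 2 := by
  have hcard : (Fintype.card ι : ℝ) ≠ 0 := Nat.cast_ne_zero.2 Fintype.card_ne_zero
  have hexpand :
      ∑ k, (y k - r) ^ 2 = ∑ k, y k ^ 2 - 2 * r * ∑ k, y k + Fintype.card ι * r ^ 2 := by
    simp only [sub_sq, Finset.sum_add_distrib, Finset.sum_sub_distrib, ← Finset.sum_mul,
      ← Finset.mul_sum, Finset.sum_const, Finset.card_univ, nsmul_eq_mul]
    ring
  rw [hexpand]
  field_simp

theorem stmt13 (N K : ℕ) (hK : 0 < K) (u : Fin (2 * N) → ℝ)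
    (Xr Xi : Fin K → (Fin (2 * N) → ℝ)) (R₂ : ℝ)
    (Y : Fin K → ℂ)
    (hY : ∀ k, Y k = (u ⬝ᵥ Xr k : ℝ) + (u ⬝ᵥ Xi k : ℝ) * Complex.I)
    (Xbar : Fin K → Matrix (Fin (2 * N)) (Fin (2 * N)) ℝ)
    (hXbar : ∀ k, Xbar k = vecMulVec (Xr k) (Xr k) + vecMulVec (Xi k) (Xi k))
    (v : Qidx (2 * N) → ℝ) (hv : v = qvec u)
    (b : Qidx (2 * N) → ℝ) (hb : b = (K : ℝ)⁻¹ • ∑ k, svec (Xbar k))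
    (C : Matrix (Qidx (2 * N)) (Qidx (2 * N)) ℝ)
    (hC : C = (K : ℝ)⁻¹ • ∑ k, vecMulVec (svec (Xbar k)) (svec (Xbar k))) :
    ((K : ℝ)⁻¹ * ∑ k, ‖Y k‖ ^ 4 = v ⬝ᵥ C.mulVec v) ∧
    ((K : ℝ)⁻¹ * ∑ k, ‖Y k‖ ^ 2 = v ⬝ᵥ b) ∧
    ((K : ℝ)⁻¹ * ∑ k, (‖Y k‖ ^ 2 - R₂) ^ 2 =
      v ⬝ᵥ C.mulVec v - 2 * R₂ * (b ⬝ᵥ v) + R₂ ^ 2) := by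
  have hnorm : ∀ k, ‖Y k‖ ^ 2 = v ⬝ᵥ svec (Xbar k) := fun k => by
    rw [hY, hXbar, hv, norm_sq_eq_qvec_dotProduct_svec]
  have hsecond : (K : ℝ)⁻¹ * ∑ k, ‖Y k‖ ^ 2 = v ⬝ᵥ b := by
    simp_rw [hnorm, hb, dotProduct_smul, dotProduct_sum, smul_eq_mul]
  have hfourth : (K : ℝ)⁻¹ * ∑ k, ‖Y k‖ ^ 4 = v ⬝ᵥ C.mulVec v := by
    simp_rw [hC, ← mul_sum_sq_dotProduct, ← hnorm, ← pow_mul]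
  refine ⟨hfourth, hsecond, ?_⟩
  have : Nonempty (Fin K) := Fin.pos_iff_nonempty.1 hK
  have hcost := inv_card_mul_sum_sub_sq (fun k => ‖Y k‖ ^ 2) R₂
  simp_rw [Fintype.card_fin, ← pow_mul] at hcost
  rw [hcost, hfourth, hsecond, dotProduct_comm b]
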